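/- Let s = (s₁,s₂,s₃) ∈ ℝ³ with s₁,s₂,s₃ > 0. Then the following are equivalent: (i) p_r(s) > 0 for all r = 1,2,3 and s₁,s₂,s₃ are pairwise distinct; (ii) there exists a = (a₁,a₂,a₃) ∈ ℝ³ such that M₂₄(s,a) is positive definite, s_{r+1} + s_{r+2} - s_r + 3S(s)/(2s_r) + 7a_r > 0 for all r, and a_r < a_r⁰(s) for all r. (This is the matrix-level statement that a homogeneous metric g_s on the octonionic flag manifold W²⁴ = F₄/Spin(8) has strongly positive curvature if and only if it has sec > 0 and does not submerge onto the Cayley projective plane, i.e. no two of the s_r are equal.) -/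

import Mathlib

open Matrix

/-- `S(s) = 2(s₁s₂+s₁s₃+s₂s₃) - (s₁²+s₂²+s₃²)`. -/
noncomputable def Spoly (s : Fin 3 → ℝ) : ℝ :=
  2 * (s 0 * s 1 + s 0 * s 2 + s 1 * s 2) - (s 0 ^ 2 + s 1 ^ 2 + s 2 ^ 2)

/-- `p_r(s) = (s_{r+1}-s_{r+2})² + 2 s_r (s_{r+1}+s_{r+2}) - 3 s_r²`, indices mod 3. -/
noncomputable def ppoly (s : Fin 3 → ℝ) (r : Fin 3) : ℝ :=
  (s (r + 1) - s (r + 2)) ^ 2 + 2 * s r * (s (r + 1) + s (r + 2)) - 3 * s r ^ 2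

/-- `a_r⁰(s) = ((s_{r+1}-s_{r+2})² - s_r²)/(2 s_r)`, indices mod 3. -/
noncomputable def a0 (s : Fin 3 → ℝ) (r : Fin 3) : ℝ :=
  ((s (r + 1) - s (r + 2)) ^ 2 - s r ^ 2) / (2 * s r)

/-- First block of the modified curvature operator of `(W²⁴, g_s)`. -/
noncomputable def M24 (s a : Fin 3 → ℝ) : Matrix (Fin 3) (Fin 3) ℝ :=
  !![4 * s 0,                   Spoly s / s 2 - 2 * a 2,  Spoly s / s 1 - 2 * a 1;
     Spoly s / s 2 - 2 * a 2,   4 * s 1,                  Spoly s / s 0 - 2 * a 0;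
     Spoly s / s 1 - 2 * a 1,   Spoly s / s 0 - 2 * a 0,  4 * s 2]

/-!
Write `a_r = a_r⁰(s) - u_r / (2 s_r)` (indices `0, 1, 2`). Then `a_r < a_r⁰(s)` reads `0 < u_r`,
the linear conditions read `7 u_r < 4 p_r(s)`, and conjugating `M₂₄` by `diag s` clears its
denominators: up to a positive factor it becomes `gapMatrix s u`, whose off-diagonal entry
opposite `r` is `2 (s_r (s_{r+1} + s_{r+2}) - (s_{r+1} - s_{r+2})²) + u_r`.

If `s₀ = s₁`, the test vector `(1, -1, 0)` forces `a₂ ≥ a₂⁰(s)`, so the `s_r` are distinct; and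
`p_r(s) > 0` because `0 < 7 u_r < 4 p_r(s)`.

Conversely, `gapMatrix s 0` is singular with kernel `(s₁ - s₂, s₂ - s₀, s₀ - s₁)`, so the
derivative of its determinant in `u_r` is `8 S(s) (s_{r+2} - s_r) (s_r - s_{r+1})`, positive when
`s_r` is the median of the three distinct values. By cyclic symmetry take `r = 0`: raising `u₀`
to a small `t > 0` and then `u₁ = u₂` to a much smaller `δ > 0` makes all leading minors
positive, and continuity keeps the linear conditions.
-/

open Filter Topology

theorem Matrix.posDef_fin_three_of_minors {A : Matrix (Fin 3) (Fin 3) ℝ} (hA : A.IsHermitian)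
    (h₁ : 0 < A 0 0) (h₂ : 0 < A 0 0 * A 1 1 - A 0 1 * A 1 0) (h₃ : 0 < A.det) : A.PosDef := by
  refine .of_dotProduct_mulVec_pos hA fun v hv => ?_
  have h₁₀ : A 1 0 = A 0 1 := by simpa using hA.apply 0 1
  have h₂₀ : A 2 0 = A 0 2 := by simpa using hA.apply 0 2
  have h₂₁ : A 2 1 = A 1 2 := by simpa using hA.apply 1 2
  rw [h₁₀] at h₂
  set m := A 0 0 * A 1 1 - A 0 1 * A 0 1
  -- completing the square twice
  have key : A 0 0 * m * (star v ⬝ᵥ A *ᵥ v) =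
      m * (A 0 0 * v 0 + A 0 1 * v 1 + A 0 2 * v 2) ^ 2
        + (m * v 1 + (A 0 0 * A 1 2 - A 0 1 * A 0 2) * v 2) ^ 2 + A 0 0 * A.det * v 2 ^ 2 := by
    simp only [star_trivial, dotProduct, mulVec, Fin.sum_univ_three, det_fin_three, h₁₀, h₂₀,
      h₂₁, m]
    ring
  refine pos_of_mul_pos_right (key ▸ ?_) (mul_pos h₁ h₂).le
  rcases ne_or_eq (v 2) 0 with hv₂ | hv₂
  · positivity
  rcases ne_or_eq (v 1) 0 with hv₁ | hv₁
  · simp only [hv₂, mul_zero, add_zero, zero_pow two_ne_zero]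
    positivity
  have hv₀ : v 0 ≠ 0 := fun hv₀ => hv (by ext i; fin_cases i <;> assumption)
  simp only [hv₁, hv₂, mul_zero, add_zero, zero_pow two_ne_zero]
  positivity

theorem Spoly_eq (s : Fin 3 → ℝ) (r : Fin 3) :
    Spoly s = 2 * s r * (s (r + 1) + s (r + 2)) - s r ^ 2 - (s (r + 1) - s (r + 2)) ^ 2 := by
  fin_cases r <;> simp [Spoly] <;> ring

theorem sum_ppoly (s : Fin 3 → ℝ) : ∑ r, ppoly s r = Spoly s := by
  simp [Fin.sum_univ_three, ppoly, Spoly]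
  ring

theorem Spoly_comp_add (s : Fin 3 → ℝ) (k : Fin 3) : Spoly (fun r => s (r + k)) = Spoly s := by
  fin_cases k <;> simp [Spoly] <;> ring

theorem ppoly_comp_add (s : Fin 3 → ℝ) (k r : Fin 3) :
    ppoly (fun r => s (r + k)) r = ppoly s (r + k) := by
  simp only [ppoly, add_right_comm r _ k]

theorem a0_comp_add (s : Fin 3 → ℝ) (k r : Fin 3) :
    a0 (fun r => s (r + k)) r = a0 s (r + k) := by
  simp only [a0, add_right_comm r _ k]

theorem M24_comp_add (s a : Fin 3 → ℝ) (k : Fin 3) :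
    M24 (fun r => s (r + k)) (fun r => a (r + k)) = (M24 s a).submatrix (· + k) (· + k) := by
  rw [M24, Spoly_comp_add]
  ext i j
  fin_cases k <;> fin_cases i <;> fin_cases j <;> simp [M24]

theorem linearCondition_pos_iff (s a : Fin 3 → ℝ) {r : Fin 3} (hr : 0 < s r) :
    0 < s (r + 1) + s (r + 2) - s r + 3 * Spoly s / (2 * s r) + 7 * a r ↔
      14 * s r * (a0 s r - a r) < 4 * ppoly s r := by
  have : s (r + 1) + s (r + 2) - s r + 3 * Spoly s / (2 * s r) + 7 * a r =
      (4 * ppoly s r - 14 * s r * (a0 s r - a r)) / (2 * s r) := by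
    rw [Spoly_eq s r, ppoly, a0]
    field_simp
    ring
  rw [this, div_pos_iff_of_pos_right (by positivity), sub_pos]

/-- Condition (ii) of the theorem for a fixed `a`. -/
def BlocksPosDef (s a : Fin 3 → ℝ) : Prop :=
  (M24 s a).PosDef ∧
    (∀ r, 0 < s (r + 1) + s (r + 2) - s r + 3 * Spoly s / (2 * s r) + 7 * a r) ∧
    ∀ r, a r < a0 s r

namespace BlocksPosDef

variable {s a : Fin 3 → ℝ}

theorem comp_add (h : BlocksPosDef s a) (k : Fin 3) :
    BlocksPosDef (fun r => s (r + k)) (fun r => a (r + k)) := by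
  refine ⟨?_, fun r => ?_, fun r => ?_⟩
  · rw [M24_comp_add]
    exact h.1.submatrix (add_left_injective k)
  · simpa only [Spoly_comp_add, add_right_comm r _ k] using h.2.1 (r + k)
  · simpa only [a0_comp_add] using h.2.2 (r + k)

theorem ppoly_pos (h : BlocksPosDef s a) {r : Fin 3} (hr : 0 < s r) : 0 < ppoly s r := by
  have := (linearCondition_pos_iff s a hr).1 (h.2.1 r)
  nlinarith [h.2.2 r]

theorem apply_zero_ne_apply_one (h : BlocksPosDef s a) (h₂ : s 2 ≠ 0) : s 0 ≠ s 1 := by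
  intro h₀₁
  have hS : Spoly s = s 2 * (4 * s 1 - s 2) := by
    rw [Spoly, h₀₁]
    ring
  have hq : star ![1, -1, 0] ⬝ᵥ M24 s a *ᵥ ![1, -1, 0] = 2 * s 2 + 4 * a 2 := by
    simp [M24, hS, h₀₁, h₂, dotProduct, mulVec, Fin.sum_univ_three]
    ring
  have ha0 : a0 s 2 = -(s 2 / 2) := by
    simp [a0, h₀₁]
    field_simp
  have := ha0 ▸ h.2.2 2
  have := hq ▸ h.1.dotProduct_mulVec_pos (x := ![1, -1, 0]) (by simp)
  linarith

end BlocksPosDef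

noncomputable def gapMatrix (s u : Fin 3 → ℝ) : Matrix (Fin 3) (Fin 3) ℝ :=
  !![4 * s 1 * s 2, 2 * (s 2 * (s 0 + s 1) - (s 0 - s 1) ^ 2) + u 2,
      2 * (s 1 * (s 2 + s 0) - (s 2 - s 0) ^ 2) + u 1;
    2 * (s 2 * (s 0 + s 1) - (s 0 - s 1) ^ 2) + u 2, 4 * s 2 * s 0,
      2 * (s 0 * (s 1 + s 2) - (s 1 - s 2) ^ 2) + u 0;
    2 * (s 1 * (s 2 + s 0) - (s 2 - s 0) ^ 2) + u 1,
      2 * (s 0 * (s 1 + s 2) - (s 1 - s 2) ^ 2) + u 0, 4 * s 0 * s 1]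

theorem M24_eq_smul_gapMatrix {s : Fin 3 → ℝ} (hs : ∀ r, s r ≠ 0) (u : Fin 3 → ℝ) :
    M24 s (fun r => a0 s r - u r / (2 * s r)) =
      (s 0 * s 1 * s 2)⁻¹ • ((diagonal s)ᴴ * gapMatrix s u * diagonal s) := by
  have h₀ := hs 0
  have h₁ := hs 1
  have h₂ := hs 2
  ext i j
  fin_cases i <;> fin_cases j <;>
    simp [M24, gapMatrix, a0, Spoly, mul_apply, diagonal] <;>
    field_simp <;> ring

theorem blocksPosDef_of_gap {s u : Fin 3 → ℝ} (hs : ∀ r, 0 < s r) (hu : ∀ r, 0 < u r)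
    (hup : ∀ r, 7 * u r < 4 * ppoly s r) (hP : (gapMatrix s u).PosDef) :
    BlocksPosDef s (fun r => a0 s r - u r / (2 * s r)) := by
  refine ⟨?_, fun r => ?_, fun r => ?_⟩
  · rw [M24_eq_smul_gapMatrix (fun r => (hs r).ne')]
    have hD : Function.Injective (diagonal s).mulVec :=
      mulVec_injective_of_isUnit (isUnit_diagonal.2 (Pi.isUnit_iff.2 fun r => (hs r).ne'.isUnit))
    exact (hP.conjTranspose_mul_mul_same hD).smul
      (inv_pos.2 (mul_pos (mul_pos (hs 0) (hs 1)) (hs 2)))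
  · refine (linearCondition_pos_iff s (fun r => a0 s r - u r / (2 * s r)) (hs r)).2 ?_
    have := (hs r).ne'
    field_simp
    linarith [hup r]
  · have := hs r
    simpa using div_pos (hu r) (by positivity : (0 : ℝ) < 2 * s r)

theorem continuous_gapMatrix (s : Fin 3 → ℝ) : Continuous (gapMatrix s) :=
  continuous_pi fun i => continuous_pi fun j => by
    fin_cases i <;> fin_cases j <;> simp [gapMatrix] <;> fun_prop

theorem det_gapMatrix_single (s : Fin 3 → ℝ) (t : ℝ) : (gapMatrix s ![t, 0, 0]).det =
    t * (8 * Spoly s * ((s 2 - s 0) * (s 0 - s 1)) - 4 * s 1 * s 2 * t) := by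
  simp [gapMatrix, det_fin_three, Spoly]
  ring

theorem gapMatrix_single_minor (s : Fin 3 → ℝ) (t : ℝ) :
    gapMatrix s ![t, 0, 0] 0 0 * gapMatrix s ![t, 0, 0] 1 1 -
      gapMatrix s ![t, 0, 0] 0 1 * gapMatrix s ![t, 0, 0] 1 0 =
      4 * Spoly s * (s 0 - s 1) ^ 2 := by
  simp [gapMatrix, Spoly]
  ring

theorem eventually_nhdsGT_lt {f g : ℝ → ℝ} (hf : Continuous f) (hg : Continuous g)
    (h : f 0 < g 0) : ∀ᶠ δ in 𝓝[>] 0, f δ < g δ :=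
  (hf.continuousAt.eventually_lt hg.continuousAt h).filter_mono nhdsWithin_le_nhds

theorem exists_blocksPosDef_of_median {s : Fin 3 → ℝ} (hs : ∀ r, 0 < s r)
    (hp : ∀ r, 0 < ppoly s r) (hmed : 0 < (s 2 - s 0) * (s 0 - s 1)) :
    ∃ a, BlocksPosDef s a := by
  have hS : 0 < Spoly s := sum_ppoly s ▸ Finset.sum_pos (fun r _ => hp r) Finset.univ_nonempty
  have hs₀ := hs 0
  have hs₁ := hs 1
  have hs₂ := hs 2
  obtain ⟨t, ht, ht₀, ht_det⟩ : ∃ t, 0 < t ∧ 7 * t < 4 * ppoly s 0 ∧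
      4 * s 1 * s 2 * t < 8 * Spoly s * ((s 2 - s 0) * (s 0 - s 1)) :=
    (eventually_mem_nhdsWithin.and <| (eventually_nhdsGT_lt (by fun_prop) (by fun_prop)
      (by simpa using hp 0)).and (eventually_nhdsGT_lt (by fun_prop) (by fun_prop)
      (by simpa [mul_assoc] using mul_pos hS hmed))).exists
  have hP : Continuous fun δ => gapMatrix s ![t, δ, δ] :=
    (continuous_gapMatrix s).comp (by fun_prop)
  obtain ⟨δ, hδ, hδ₁, hδ₂, hδ_minor, hδ_det⟩ : ∃ δ, 0 < δ ∧ 7 * δ < 4 * ppoly s 1 ∧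
      7 * δ < 4 * ppoly s 2 ∧
      0 < gapMatrix s ![t, δ, δ] 0 0 * gapMatrix s ![t, δ, δ] 1 1 -
        gapMatrix s ![t, δ, δ] 0 1 * gapMatrix s ![t, δ, δ] 1 0 ∧
      0 < (gapMatrix s ![t, δ, δ]).det := by
    refine (eventually_mem_nhdsWithin.and <|
      (eventually_nhdsGT_lt (by fun_prop) (by fun_prop) (by simpa using hp 1)).and <|
      (eventually_nhdsGT_lt (by fun_prop) (by fun_prop) (by simpa using hp 2)).and <|
      (eventually_nhdsGT_lt continuous_const (by fun_prop) ?_).and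
      (eventually_nhdsGT_lt continuous_const hP.matrix_det ?_)).exists
    · have : s 0 - s 1 ≠ 0 := fun h => by simp [h] at hmed
      rw [gapMatrix_single_minor]
      positivity
    · rw [det_gapMatrix_single]
      exact mul_pos ht (by linarith)
  refine ⟨_, blocksPosDef_of_gap (u := ![t, δ, δ]) hs (fun r => ?_) (fun r => ?_)
    (posDef_fin_three_of_minors ?_ ?_ hδ_minor hδ_det)⟩
  · fin_cases r <;> simpa
  · fin_cases r <;> simpa
  · ext i j
    fin_cases i <;> fin_cases j <;> simp [gapMatrix]
  · simp only [gapMatrix, of_apply, cons_val', cons_val_zero, empty_val', cons_val_fin_one]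
    positivity

theorem exists_median {s : Fin 3 → ℝ} (h₀₁ : s 0 ≠ s 1) (h₀₂ : s 0 ≠ s 2) (h₁₂ : s 1 ≠ s 2) :
    ∃ k, 0 < (s (k + 2) - s k) * (s k - s (k + 1)) := by
  by_contra! h
  have h₀ := h 0
  have h₁ := h 1
  have h₂ := h 2
  simp only [Fin.reduceAdd, zero_add] at h₀ h₁ h₂
  have hprod : ((s 2 - s 0) * (s 0 - s 1)) * ((s 0 - s 1) * (s 1 - s 2)) *
      ((s 1 - s 2) * (s 2 - s 0)) = ((s 0 - s 1) * (s 1 - s 2) * (s 2 - s 0)) ^ 2 := by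
    ring
  have : 0 < ((s 0 - s 1) * (s 1 - s 2) * (s 2 - s 0)) ^ 2 := by
    have := sub_ne_zero.2 h₀₁
    have := sub_ne_zero.2 h₁₂
    have := sub_ne_zero.2 h₀₂.symm
    positivity
  nlinarith [mul_nonneg_of_nonpos_of_nonpos h₀ h₁]

theorem stronglyPos_W24_iff (s : Fin 3 → ℝ) (hs : ∀ r, 0 < s r) :
    ((∀ r, 0 < ppoly s r) ∧ s 0 ≠ s 1 ∧ s 0 ≠ s 2 ∧ s 1 ≠ s 2) ↔
      ∃ a : Fin 3 → ℝ, (M24 s a).PosDef ∧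
        (∀ r, 0 < s (r + 1) + s (r + 2) - s r + 3 * Spoly s / (2 * s r) + 7 * a r) ∧
        (∀ r, a r < a0 s r) := by
  change _ ↔ ∃ a, BlocksPosDef s a
  constructor
  · rintro ⟨hp, h₀₁, h₀₂, h₁₂⟩
    obtain ⟨k, hk⟩ := exists_median h₀₁ h₀₂ h₁₂
    obtain ⟨a, ha⟩ := exists_blocksPosDef_of_median (s := fun r => s (r + k)) (fun r => hs _)
      (fun r => ppoly_comp_add s k r ▸ hp _) (by simpa [add_comm] using hk)
    exact ⟨_, by simpa using ha.comp_add (-k)⟩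
  · rintro ⟨a, ha⟩
    refine ⟨fun r => ha.ppoly_pos (hs r), ha.apply_zero_ne_apply_one (hs 2).ne', ?_, ?_⟩
    · simpa using ((ha.comp_add 2).apply_zero_ne_apply_one (hs _).ne').symm
    · simpa using (ha.comp_add 1).apply_zero_ne_apply_one (hs _).ne'
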